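/- There exists a finite simple graph X that is triangle-free and admits a proper 3-coloring, containing six pairwise distinct vertices x₁, x₂, y₁, y₂, z₁, z₂ such that: (i) the set {x₁, x₂, y₁, y₂, z₁, z₂} is an independent set in X; and (ii) for every proper 3-coloring c of X, the colors c(x₁) ≠ c(x₂), c(y₁) ≠ c(y₂), c(z₁) ≠ c(z₂), and the three unordered pairs {c(x₁), c(x₂)}, {c(y₁), c(y₂)}, {c(z₁), c(z₂)} are pairwise distinct as two-element sets of colors. -/

import Mathlib

/-!
A triangle-free graph with non-adjacent terminals `s`, `t` that get different colors in every
3-coloring: take a path `p₀ p₁ p₂ p₃ p₄`, join `s` to `p₀ p₂ p₄` and `t` to `p₁ p₃`, and add an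
edge `ab` with `a ~ p₁, p₄` and `b ~ p₀, p₃`. If `s` and `t` had the same color, the path would
alternate between the two other colors, which forces both `a` and `b` to take the color of `s`.

Gluing copies of such a gadget along independent terminals creates no triangle, and any coloring
of the terminals separating each glued pair extends to the copies. Separate each of the pairs
`x`, `y`, `z`, and also `x₁` from `z₁, z₂` and `x₂` from `y₁, y₂`. Then `{c z₁, c z₂}` is the
complement of `c x₁` and `{c y₁, c y₂}` that of `c x₂`, so the three pairs of colors differ.
-/

open SimpleGraph Sum

theorem eq_of_ne_of_ne_of_card_le_three {α : Type*} [Fintype α] (hα : Fintype.card α ≤ 3)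
    {a b c d : α} (hab : a ≠ b) (hca : c ≠ a) (hcb : c ≠ b) (hda : d ≠ a) (hdb : d ≠ b) :
    c = d := by
  classical
  by_contra hcd
  have hcard : ({a, b, c, d} : Finset α).card = 4 :=
    Finset.card_eq_four.2 ⟨a, b, c, d, hab, hca.symm, hda.symm, hcb.symm, hdb.symm, hcd, rfl⟩
  have := Finset.card_le_univ ({a, b, c, d} : Finset α)
  omega

namespace SimpleGraph

variable {T E I : Type*} (G : SimpleGraph (Fin 2 ⊕ I)) (ends : E → Fin 2 ↪ T)

def gadgetEmbedding (e : E) : Fin 2 ⊕ I ↪ T ⊕ E × I :=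
  (ends e).sumMap (Function.Embedding.sectR e I)

/-- Each `e : E` is replaced by a copy of `G` whose terminals `inl 0`, `inl 1` are glued to
`ends e 0`, `ends e 1` and whose other vertices become `inr (e, k)`. -/
def replaceEdges : SimpleGraph (T ⊕ E × I) :=
  ⨆ e, G.map (gadgetEmbedding ends e)

variable {G ends}

theorem replaceEdges_adj {x y : T ⊕ E × I} :
    (replaceEdges G ends).Adj x y ↔
      ∃ e u v, G.Adj u v ∧ gadgetEmbedding ends e u = x ∧ gadgetEmbedding ends e v = y := by
  simp [replaceEdges]

def gadgetHom (e : E) : G →g replaceEdges G ends :=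
  (Hom.ofLE (le_iSup (fun e => G.map (gadgetEmbedding ends e)) e)).comp
    (Embedding.map (gadgetEmbedding ends e) G).toHom

theorem replaceEdges_coloring_ne {α : Type*} (hG : ∀ g : G.Coloring α, g (inl 0) ≠ g (inl 1))
    (c : (replaceEdges G ends).Coloring α) (e : E) :
    c (inl (ends e 0)) ≠ c (inl (ends e 1)) :=
  hG (c.comp (gadgetHom e))

theorem replaceEdges_colorable {α : Type*}
    (hG : ∀ a b : α, a ≠ b → ∃ g : G.Coloring α, g (inl 0) = a ∧ g (inl 1) = b)
    (f : T → α) (hf : ∀ e, f (ends e 0) ≠ f (ends e 1)) :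
    Nonempty ((replaceEdges G ends).Coloring α) := by
  choose g hg using fun e => hG _ _ (hf e)
  let col : T ⊕ E × I → α := Sum.elim f fun k => g k.1 (inr k.2)
  have hcol (e : E) (u : Fin 2 ⊕ I) : col (gadgetEmbedding ends e u) = g e u := by
    cases u with
    | inl i => fin_cases i <;> simp [col, gadgetEmbedding, hg]
    | inr k => rfl
  refine ⟨Coloring.mk col ?_⟩
  rintro _ _ h
  obtain ⟨e, u, v, huv, rfl, rfl⟩ := replaceEdges_adj.1 h
  rw [hcol, hcol]
  exact (g e).valid huv

theorem replaceEdges_adj_inr {e : E} {k : I} {y : T ⊕ E × I}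
    (h : (replaceEdges G ends).Adj (inr (e, k)) y) :
    ∃ v, G.Adj (inr k) v ∧ gadgetEmbedding ends e v = y := by
  obtain ⟨e', u | k', v, huv, hu, rfl⟩ := replaceEdges_adj.1 h
  · simp [gadgetEmbedding] at hu
  · obtain ⟨rfl, rfl⟩ : e' = e ∧ k' = k := by simpa [gadgetEmbedding] using hu
    exact ⟨v, huv, rfl⟩

theorem replaceEdges_not_adj_inl (hterm : ∀ i j, ¬ G.Adj (inl i) (inl j)) (s t : T) :
    ¬ (replaceEdges G ends).Adj (inl s) (inl t) := by
  intro h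
  obtain ⟨e, u | k, v | l, huv, hu, hv⟩ := replaceEdges_adj.1 h
  · exact hterm u v huv
  all_goals simp [gadgetEmbedding] at hu hv

theorem replaceEdges_adj_gadgetEmbedding_iff (hterm : ∀ i j, ¬ G.Adj (inl i) (inl j))
    {e : E} {v w : Fin 2 ⊕ I} :
    (replaceEdges G ends).Adj (gadgetEmbedding ends e v) (gadgetEmbedding ends e w) ↔
      G.Adj v w := by
  refine ⟨fun h => ?_, (gadgetHom e).map_adj⟩
  rcases v with i | k
  · rcases w with j | l
    · exact absurd h (replaceEdges_not_adj_inl hterm _ _)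
    · obtain ⟨v', hv', heq⟩ := replaceEdges_adj_inr h.symm
      rw [(gadgetEmbedding ends e).injective heq] at hv'
      exact hv'.symm
  · obtain ⟨w', hw', heq⟩ := replaceEdges_adj_inr h
    rwa [(gadgetEmbedding ends e).injective heq] at hw'

theorem replaceEdges_cliqueFree_three (hterm : ∀ i j, ¬ G.Adj (inl i) (inl j))
    (hG : G.CliqueFree 3) :
    (replaceEdges G ends).CliqueFree 3 := by
  classical
  have no_triangle_at_inr (e : E) (k : I) (y z : T ⊕ E × I)
      (hy : (replaceEdges G ends).Adj (inr (e, k)) y)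
      (hz : (replaceEdges G ends).Adj (inr (e, k)) z) :
      ¬ (replaceEdges G ends).Adj y z := by
    intro hyz
    obtain ⟨v, hv, rfl⟩ := replaceEdges_adj_inr hy
    obtain ⟨w, hw, rfl⟩ := replaceEdges_adj_inr hz
    exact hG _ (is3Clique_triple_iff.2
      ⟨hv, hw, (replaceEdges_adj_gadgetEmbedding_iff hterm).1 hyz⟩)
  intro t ht
  obtain ⟨a, b, c, hab, hac, hbc, -⟩ := is3Clique_iff.1 ht
  rcases a with s | ⟨e, k⟩
  · rcases b with t | ⟨e, k⟩
    · exact replaceEdges_not_adj_inl hterm s t hab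
    · exact no_triangle_at_inr e k _ _ hab.symm hbc hac
  · exact no_triangle_at_inr e k _ _ hab hac hbc

end SimpleGraph

/-- `s = inl 0`, `t = inl 1`, the path `p₀ … p₄` is `inr 0 … inr 4`, and `a = inr 5`,
`b = inr 6`. -/
def separationGadgetEdges : List ((Fin 2 ⊕ Fin 7) × (Fin 2 ⊕ Fin 7)) :=
  [(inl 0, inr 0), (inl 0, inr 2), (inl 0, inr 4), (inl 1, inr 1), (inl 1, inr 3),
   (inr 0, inr 1), (inr 1, inr 2), (inr 2, inr 3), (inr 3, inr 4),
   (inr 5, inr 1), (inr 5, inr 4), (inr 6, inr 0), (inr 6, inr 3), (inr 5, inr 6)]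

def separationGadget : SimpleGraph (Fin 2 ⊕ Fin 7) :=
  fromRel fun u v => ∃ e ∈ separationGadgetEdges, e = (u, v)

instance : DecidableRel separationGadget.Adj := fun u v =>
  inferInstanceAs (Decidable (u ≠ v ∧
    ((∃ e ∈ separationGadgetEdges, e = (u, v)) ∨ ∃ e ∈ separationGadgetEdges, e = (v, u))))

theorem separationGadget_not_adj_inl (i j : Fin 2) : ¬ separationGadget.Adj (inl i) (inl j) := by
  revert i j; decide

theorem separationGadget_cliqueFree_three : separationGadget.CliqueFree 3 := by
  have : ∀ u v w, separationGadget.Adj u v → separationGadget.Adj u w →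
      ¬ separationGadget.Adj v w := by decide
  intro t ht
  obtain ⟨a, b, c, hab, hac, hbc, -⟩ := is3Clique_iff.1 ht
  exact this a b c hab hac hbc

theorem separationGadget_coloring_ne {α : Type*} [Fintype α] (hα : Fintype.card α ≤ 3)
    (c : separationGadget.Coloring α) : c (inl 0) ≠ c (inl 1) := by
  intro hst
  have ne (u v) (huv : separationGadget.Adj u v := by decide) : c u ≠ c v := c.valid huv
  have third := @eq_of_ne_of_ne_of_card_le_three α _ hα
  have hs1 : c (inl 0) ≠ c (inr 1) := hst ▸ ne _ _
  have hs3 : c (inl 0) ≠ c (inr 3) := hst ▸ ne _ _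
  have h02 : c (inr 0) = c (inr 2) :=
    third hs1 (ne _ _).symm (ne _ _) (ne _ _).symm (ne _ _).symm
  have h24 : c (inr 2) = c (inr 4) :=
    third hs3 (ne _ _).symm (ne _ _) (ne _ _).symm (ne _ _).symm
  have h13 : c (inr 1) = c (inr 3) :=
    third (ne (inl 0) (inr 2)) hs1.symm (ne _ _) hs3.symm (ne _ _).symm
  have h56 : c (inr 5) = c (inr 6) :=
    third (ne (inr 0) (inr 1)) (h02.trans h24 ▸ ne _ _) (ne _ _) (ne _ _) (h13 ▸ ne _ _)
  exact absurd h56 (ne (inr 5) (inr 6))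

theorem separationGadget_exists_coloring (a b : Fin 3) (hab : a ≠ b) :
    ∃ g : separationGadget.Coloring (Fin 3), g (inl 0) = a ∧ g (inl 1) = b := by
  obtain ⟨σ, rfl, rfl⟩ : ∃ σ : Equiv.Perm (Fin 3), σ 0 = a ∧ σ 1 = b := by
    revert a b; decide
  let g : separationGadget.Coloring (Fin 3) :=
    Coloring.mk (Sum.elim ![0, 1] ![1, 2, 1, 0, 1, 0, 2]) (by decide)
  exact ⟨(Embedding.completeGraph σ.toEmbedding).toHom.comp g, rfl, rfl⟩

theorem pairs_ne_of_card_le_three {α : Type*} [Fintype α] [DecidableEq α]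
    (hα : Fintype.card α ≤ 3) {a b c d e f : α} (hab : a ≠ b) (hcd : c ≠ d)
    (hae : a ≠ e) (haf : a ≠ f) (hbc : b ≠ c) (hbd : b ≠ d) :
    ({a, b} : Finset α) ≠ {c, d} ∧ ({a, b} : Finset α) ≠ {e, f} ∧
      ({c, d} : Finset α) ≠ {e, f} := by
  have ha : a ∈ ({c, d} : Finset α) := by
    by_cases hac : a = c
    · simp [hac]
    · simp [eq_of_ne_of_ne_of_card_le_three hα hbc hab hac hbd.symm hcd.symm]
  refine ⟨fun h => ?_, fun h => ?_, fun h => ?_⟩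
  · have hb : b ∈ ({c, d} : Finset α) := h ▸ by simp
    simp only [Finset.mem_insert, Finset.mem_singleton] at hb
    tauto
  · have ha' : a ∈ ({e, f} : Finset α) := h ▸ by simp
    simp only [Finset.mem_insert, Finset.mem_singleton] at ha'
    tauto
  · rw [h] at ha
    simp only [Finset.mem_insert, Finset.mem_singleton] at ha
    tauto

def separationEnds : Fin 7 → Fin 2 ↪ Fin 6 :=
  ![⟨![0, 1], by decide⟩, ⟨![2, 3], by decide⟩, ⟨![4, 5], by decide⟩,
    ⟨![0, 4], by decide⟩, ⟨![0, 5], by decide⟩, ⟨![1, 2], by decide⟩, ⟨![1, 3], by decide⟩]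

theorem gadget_X_exists :
    ∃ (W : Type) (_ : Fintype W) (X : SimpleGraph W) (x₁ x₂ y₁ y₂ z₁ z₂ : W),
      X.CliqueFree 3 ∧ X.Colorable 3 ∧
      ([x₁, x₂, y₁, y₂, z₁, z₂] : List W).Nodup ∧
      (∀ a ∈ ({x₁, x₂, y₁, y₂, z₁, z₂} : Set W),
        ∀ b ∈ ({x₁, x₂, y₁, y₂, z₁, z₂} : Set W), ¬ X.Adj a b) ∧
      ∀ c : X.Coloring (Fin 3),
        c x₁ ≠ c x₂ ∧ c y₁ ≠ c y₂ ∧ c z₁ ≠ c z₂ ∧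
        ({c x₁, c x₂} : Finset (Fin 3)) ≠ ({c y₁, c y₂} : Finset (Fin 3)) ∧
        ({c x₁, c x₂} : Finset (Fin 3)) ≠ ({c z₁, c z₂} : Finset (Fin 3)) ∧
        ({c y₁, c y₂} : Finset (Fin 3)) ≠ ({c z₁, c z₂} : Finset (Fin 3)) := by
  refine ⟨Fin 6 ⊕ Fin 7 × Fin 7, inferInstance, replaceEdges separationGadget separationEnds,
    inl 0, inl 1, inl 2, inl 3, inl 4, inl 5,
    replaceEdges_cliqueFree_three separationGadget_not_adj_inl
      separationGadget_cliqueFree_three,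
    replaceEdges_colorable separationGadget_exists_coloring ![0, 1, 0, 2, 1, 2] (by decide),
    by decide, fun a ha b hb => ?_, fun c => ?_⟩
  · have hinl : ({inl 0, inl 1, inl 2, inl 3, inl 4, inl 5} : Set (Fin 6 ⊕ Fin 7 × Fin 7)) ⊆
        Set.range inl := by
      simp [Set.insert_subset_iff]
    obtain ⟨s, rfl⟩ := hinl ha
    obtain ⟨t, rfl⟩ := hinl hb
    exact replaceEdges_not_adj_inl separationGadget_not_adj_inl s t
  · have sep := replaceEdges_coloring_ne (separationGadget_coloring_ne (by simp)) c
    exact ⟨sep 0, sep 1, sep 2,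
      pairs_ne_of_card_le_three (by simp) (sep 0) (sep 1) (sep 3) (sep 4) (sep 5) (sep 6)⟩
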